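/- Let f, g: ℝ² → ℝ be continuous functions admitting distributional intrinsic gradients θ_f, θ_g ∈ L∞_loc(ℝ²) respectively. Let U ⊆ ℝ² be a bounded open set and suppose f − g has compact support contained in U. Then ∫_U θ_f dμ = ∫_U θ_g dμ. -/

import Mathlib

open MeasureTheory Set

/-- Partial derivative in the `x` (first) direction. -/
noncomputable def pdx (g : ℝ × ℝ → ℝ) (p : ℝ × ℝ) : ℝ := fderiv ℝ g p (1, 0)

/-- Partial derivative in the `z` (second) direction. -/
noncomputable def pdz (g : ℝ × ℝ → ℝ) (p : ℝ × ℝ) : ℝ := fderiv ℝ g p (0, 1)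

/-- `θ` is the distributional intrinsic gradient of `f`: for every C¹ compactly supported
test function `ψ`, `∫ θ·ψ dμ = ∫ (−f·∂_xψ + (f²/2)·∂_zψ) dμ`. -/
def IsDistribIGrad (f θ : ℝ × ℝ → ℝ) : Prop :=
  ∀ ψ : ℝ × ℝ → ℝ, ContDiff ℝ 1 ψ → HasCompactSupport ψ →
    ∫ p, θ p * ψ p = ∫ p, (-(f p) * pdx ψ p + (f p) ^ 2 / 2 * pdz ψ p)

/-- `θ` is locally essentially bounded (`θ ∈ L∞_loc`). -/
def LocEssBdd (θ : ℝ × ℝ → ℝ) : Prop :=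
  ∀ K : Set (ℝ × ℝ), IsCompact K → MemLp θ ⊤ (volume.restrict K)

open Filter Topology Manifold ContDiff

/-! Where `f ≠ g`, a test function that is locally constant has vanishing partial derivatives,
so the defining identities of `θ_f` and `θ_g` give the same value on it. Testing against smooth
cutoffs `ψₙ` supported in `U`, equal to `1` near `tsupport (f - g)` and increasing to `1` on `U`,
dominated convergence (with `θ_f, θ_g ∈ L¹(U)` as `U` is bounded) yields the equality of the
integrals over `U`. -/

theorem IsOpen.exists_seq_contDiff_eventually_one {E : Type*} [NormedAddCommGroup E]
    [NormedSpace ℝ E] [FiniteDimensional ℝ E] {U s : Set E} (hU : IsOpen U) (hs : IsClosed s)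
    (hsU : s ⊆ U) :
    ∃ ψ : ℕ → E → ℝ, (∀ n, ContDiff ℝ ∞ (ψ n)) ∧ (∀ n, ∀ x ∉ U, ψ n x = 0) ∧
      (∀ n, ∀ᶠ x in 𝓝ˢ s, ψ n x = 1) ∧ (∀ n x, ψ n x ∈ Icc 0 1) ∧
      ∀ x ∈ U, ∀ᶠ n in atTop, ψ n x = 1 := by
  obtain ⟨F, hF_closed, hF_sub, hF_union, hF_mono⟩ := hU.exists_iUnion_isClosed
  have hdisj : ∀ n, Disjoint Uᶜ (s ∪ F n) := fun n =>
    disjoint_compl_left_iff_subset.mpr (union_subset hsU (hF_sub n))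
  choose ψ hψ0 hψ1 hψ_mem using fun n =>
    exists_contMDiffMap_zero_one_nhds_of_isClosed 𝓘(ℝ, E) (n := ⊤) hU.isClosed_compl
      (hs.union (hF_closed n)) (hdisj n)
  refine ⟨fun n => ψ n, fun n => contMDiff_iff_contDiff.mp (ψ n).contMDiff,
    fun n x hx => (hψ0 n).self_of_nhdsSet x hx,
    fun n => (hψ1 n).filter_mono (nhdsSet_mono subset_union_left), hψ_mem, fun x hx => ?_⟩
  obtain ⟨N, hN⟩ := mem_iUnion.mp (hF_union.symm ▸ hx : x ∈ ⋃ n, F n)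
  filter_upwards [eventually_ge_atTop N] with n hn
  exact (hψ1 n).self_of_nhdsSet x (Or.inr (hF_mono hn hN))

theorem IsDistribIGrad.integral_mul_eq {f g θf θg ψ : ℝ × ℝ → ℝ} (hf : IsDistribIGrad f θf)
    (hg : IsDistribIGrad g θg) (hψ : ContDiff ℝ 1 ψ) (hψc : HasCompactSupport ψ)
    (hψfg : ∀ p, f p ≠ g p → fderiv ℝ ψ p = 0) :
    ∫ p, θf p * ψ p = ∫ p, θg p * ψ p := by
  rw [hf ψ hψ hψc, hg ψ hψ hψc]
  congr 1 with p
  by_cases hfg : f p = g p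
  · rw [hfg]
  · simp [pdx, pdz, hψfg p hfg]

theorem LocEssBdd.integrableOn_of_isBounded {θ : ℝ × ℝ → ℝ} (hθ : LocEssBdd θ)
    {U : Set (ℝ × ℝ)} (hU : Bornology.IsBounded U) : IntegrableOn θ U := by
  have hK := hU.isCompact_closure
  have : IsFiniteMeasure (volume.restrict (closure U)) :=
    isFiniteMeasure_restrict.mpr hK.measure_lt_top.ne
  exact IntegrableOn.mono_set ((hθ _ hK).integrable le_top) subset_closure

theorem tendsto_integral_mul_of_tendsto_one {α : Type*} [MeasurableSpace α] {μ : Measure α}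
    {θ : α → ℝ} {ψ : ℕ → α → ℝ} (hθ : Integrable θ μ) (hψm : ∀ n, AEStronglyMeasurable (ψ n) μ)
    (hψb : ∀ n, ∀ᵐ x ∂μ, |ψ n x| ≤ 1) (hψ : ∀ᵐ x ∂μ, Tendsto (fun n => ψ n x) atTop (𝓝 1)) :
    Tendsto (fun n => ∫ x, θ x * ψ n x ∂μ) atTop (𝓝 (∫ x, θ x ∂μ)) := by
  refine tendsto_integral_of_dominated_convergence (fun x => |θ x|)
    (fun n => hθ.aestronglyMeasurable.mul (hψm n)) hθ.abs (fun n => ?_) ?_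
  · filter_upwards [hψb n] with x hx
    rw [Real.norm_eq_abs, abs_mul]
    exact mul_le_of_le_one_right (abs_nonneg _) hx
  · filter_upwards [hψ] with x hx
    simpa using hx.const_mul (θ x)

theorem stmt7_general (f g θf θg : ℝ × ℝ → ℝ)
    (hθf : IsDistribIGrad f θf) (hθg : IsDistribIGrad g θg)
    (hθfb : LocEssBdd θf) (hθgb : LocEssBdd θg)
    (U : Set (ℝ × ℝ)) (hUo : IsOpen U) (hUb : Bornology.IsBounded U)
    (hsuppU : tsupport (f - g) ⊆ U) :
    ∫ p in U, θf p = ∫ p in U, θg p := by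
  obtain ⟨ψ, hψ_smooth, hψ_zero, hψ_one, hψ_mem, hψ_lim⟩ :=
    hUo.exists_seq_contDiff_eventually_one (isClosed_tsupport (f - g)) hsuppU
  have hψ_supp n : HasCompactSupport (ψ n) :=
    .intro' hUb.isCompact_closure isClosed_closure fun x hx => hψ_zero n x (hx <| subset_closure ·)
  have hψ_flat n p (hne : f p ≠ g p) : fderiv ℝ (ψ n) p = 0 := by
    have hp : p ∈ tsupport (f - g) := subset_tsupport _ (sub_ne_zero.mpr hne)
    have hψp : ψ n =ᶠ[𝓝 p] fun _ => 1 := (hψ_one n).filter_mono (nhds_le_nhdsSet hp)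
    rw [hψp.fderiv_eq, fderiv_fun_const, Pi.zero_apply]
  have hψ_abs n x : |ψ n x| ≤ 1 := abs_le.mpr ⟨by linarith [(hψ_mem n x).1], (hψ_mem n x).2⟩
  have hψ_tendsto : ∀ᵐ x ∂volume.restrict U, Tendsto (fun n => ψ n x) atTop (𝓝 1) := by
    filter_upwards [ae_restrict_mem hUo.measurableSet] with x hx
    exact tendsto_const_nhds.congr' ((hψ_lim x hx).mono fun n hn => hn.symm)
  have hlim θ (hθ : LocEssBdd θ) :
      Tendsto (fun n => ∫ p, θ p * ψ n p) atTop (𝓝 (∫ p in U, θ p)) := by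
    refine (tendsto_integral_mul_of_tendsto_one (hθ.integrableOn_of_isBounded hUb)
      (fun n => (hψ_smooth n).continuous.aestronglyMeasurable)
      (fun n => ae_of_all _ (hψ_abs n)) hψ_tendsto).congr fun n => ?_
    exact setIntegral_eq_integral_of_forall_compl_eq_zero fun x hx => by simp [hψ_zero n x hx]
  refine tendsto_nhds_unique ((hlim θf hθfb).congr fun n => ?_) (hlim θg hθgb)
  exact hθf.integral_mul_eq hθg ((hψ_smooth n).of_le (by simp)) (hψ_supp n) (hψ_flat n)

/-- if continuous `f, g` admit distributional intrinsic gradients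
`θ_f, θ_g ∈ L∞_loc`, `U` is bounded open, and `f − g` has compact support contained
in `U`, then `∫_U θ_f dμ = ∫_U θ_g dμ`. -/
theorem stmt7 (f g θf θg : ℝ × ℝ → ℝ)
    (hfc : Continuous f) (hgc : Continuous g)
    (hθf : IsDistribIGrad f θf) (hθg : IsDistribIGrad g θg)
    (hθfb : LocEssBdd θf) (hθgb : LocEssBdd θg)
    (U : Set (ℝ × ℝ)) (hUo : IsOpen U) (hUb : Bornology.IsBounded U)
    (hsupp : HasCompactSupport (f - g)) (hsuppU : tsupport (f - g) ⊆ U) :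
    ∫ p in U, θf p = ∫ p in U, θg p :=
  stmt7_general f g θf θg hθf hθg hθfb hθgb U hUo hUb hsuppU
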